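/- Let T be a tree on n vertices with s×s real matrix edge weights W_1,…,W_{n−1} such that the distance matrix D of T is invertible, and let L be the Laplacian matrix of T formed from the inverses of the weights. For i = 1,…,n let δ_i = 2 − d_i, where d_i is the degree of vertex i, and let δ = (δ_1,…,δ_n)^T and let 1 denote the all-ones column vector of length n. Then D·L = (1·δ^T) ⊗ I_s − 2 I_n ⊗ I_s. -/

import Mathlib

/-!
Write `d(i, k)` for the `(i, k)` block of `D`, the sum of the weights on the path from `i` to `k`.
The `(i, j)` block of `D L` is `∑_{k ∼ j} (d(i, j) - d(i, k)) W_{jk}⁻¹`. For `i = j` every term is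
`-I`. For `i ≠ j` let `c` be the neighbour of `j` on the path from `i`: then
`d(i, j) - d(i, c) = W_{jc}`, while `d(i, k) = d(i, j) + W_{jk}` for every other neighbour `k`, so
the sum is `I - (d_j - 1) I = δ_j I`. The weights are invertible because a kernel vector `c` of
`W_{uv}` gives the kernel vector `(e_u - e_v) ⊗ c` of `D`.
-/

open Matrix
open scoped Kronecker

noncomputable def matLap {n s : ℕ} (G : SimpleGraph (Fin n)) [DecidableRel G.Adj]
    (w : Sym2 (Fin n) → Matrix (Fin s) (Fin s) ℝ) :
    Matrix (Fin n × Fin s) (Fin n × Fin s) ℝ :=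
  Matrix.of fun p q =>
    if p.1 = q.1 then (∑ k ∈ G.neighborFinset p.1, (w (s(p.1, k)))⁻¹) p.2 q.2
    else if G.Adj p.1 q.1 then (-(w (s(p.1, q.1)))⁻¹) p.2 q.2
    else 0

namespace SimpleGraph

variable {V M : Type*} [AddCommMonoid M] {G : SimpleGraph V}

def Walk.weight {u v : V} (w : Sym2 V → M) (p : G.Walk u v) : M := (p.edges.map w).sum

namespace Walk

variable (w : Sym2 V → M) {u v x : V}

@[simp]
lemma weight_nil : (nil : G.Walk u u).weight w = 0 := rfl

@[simp]
lemma weight_concat (p : G.Walk u v) (h : G.Adj v x) :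
    (p.concat h).weight w = p.weight w + w s(v, x) := by
  simp [weight, edges_concat]

end Walk

namespace IsTree

variable (hG : G.IsTree) (w : Sym2 V → M) {u v x : V}

noncomputable def path (u v : V) : G.Walk u v := (hG.existsUnique_path u v).exists.choose

lemma isPath_path (u v : V) : (hG.path u v).IsPath := (hG.existsUnique_path u v).exists.choose_spec

lemma eq_path {p : G.Walk u v} (hp : p.IsPath) : p = hG.path u v :=
  (hG.existsUnique_path u v).unique hp (hG.isPath_path u v)

noncomputable def weightedDist (u v : V) : M := (hG.path u v).weight w

lemma weight_eq_weightedDist {p : G.Walk u v} (hp : p.IsPath) :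
    p.weight w = hG.weightedDist w u v := by
  rw [hG.eq_path hp, weightedDist]

@[simp]
lemma weightedDist_self (u : V) : hG.weightedDist w u u = 0 := by
  rw [← hG.weight_eq_weightedDist w Walk.IsPath.nil, Walk.weight_nil]

lemma weightedDist_of_adj (h : G.Adj u v) : hG.weightedDist w u v = w s(u, v) := by
  rw [← hG.weight_eq_weightedDist w (Walk.IsPath.nil.concat (by simpa using h.ne') h),
    Walk.weight_concat, Walk.weight_nil, zero_add]

lemma weightedDist_eq_add_or_eq_add (u : V) (h : G.Adj v x) :
    hG.weightedDist w u x = hG.weightedDist w u v + w s(v, x) ∨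
      hG.weightedDist w u v = hG.weightedDist w u x + w s(v, x) := by
  by_cases hx : x ∈ (hG.path u v).support
  · right
    rw [weightedDist, hG.isAcyclic.path_concat (hG.isPath_path u x) (hG.isPath_path u v) h.symm hx,
      Walk.weight_concat, Sym2.eq_swap, weightedDist]
  · left
    rw [← hG.weight_eq_weightedDist w ((hG.isPath_path u v).concat hx h), Walk.weight_concat,
      weightedDist]

lemma weightedDist_penultimate_add {p : G.Walk u v} (hp : p.IsPath) (hnil : ¬p.Nil) :
    hG.weightedDist w u p.penultimate + w s(p.penultimate, v) = hG.weightedDist w u v := by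
  have hadj := p.adj_penultimate hnil
  rw [← hG.weight_eq_weightedDist w hp, ← hG.weight_eq_weightedDist w hp.dropLast]
  conv_rhs => rw [← p.concat_dropLast hadj]
  rw [Walk.weight_concat]

lemma weightedDist_of_adj_of_ne_penultimate {p : G.Walk u v} (hp : p.IsPath) (h : G.Adj v x)
    (hx : x ≠ p.penultimate) :
    hG.weightedDist w u x = hG.weightedDist w u v + w s(v, x) := by
  have hx' : x ∉ p.support := fun hmem => hx (hG.isAcyclic.eq_penultimate_of_adj_end hp h hmem)
  rw [← hG.weight_eq_weightedDist w (hp.concat hx' h), Walk.weight_concat,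
    hG.weight_eq_weightedDist w hp]

end IsTree

section BlockMatrix

variable {m : Type*} [Fintype V] [DecidableEq V] [Fintype m] [DecidableEq m]

theorem IsTree.isUnit_weight_of_isUnit_comp {K : Type*} [Field K] (hG : G.IsTree)
    {w : Sym2 V → Matrix m m K} (hD : IsUnit (comp V V m m K (of (hG.weightedDist w))))
    {u v : V} (h : G.Adj u v) : IsUnit (w s(u, v)) := by
  rw [isUnit_iff_isUnit_det, isUnit_iff_ne_zero]
  intro hdet
  obtain ⟨c, hc, hWc⟩ := exists_mulVec_eq_zero_iff.mpr hdet
  set y : V × m → K := fun p => (Pi.single u c - Pi.single v c : V → m → K) p.1 p.2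
  have hy : y ≠ 0 := fun h0 => hc <| funext fun a => by
    simpa [y, h.ne'] using congrFun h0 (u, a)
  apply hy
  refine mulVec_injective_iff_isUnit.mpr hD ?_
  ext ⟨k, a⟩
  have hblock : (comp V V m m K (of (hG.weightedDist w)) *ᵥ y) (k, a) =
      (hG.weightedDist w k u *ᵥ c - hG.weightedDist w k v *ᵥ c) a := by
    simp [y, mulVec, dotProduct, Fintype.sum_prod_type, Pi.single_apply, ite_apply, mul_sub,
      mul_ite, Finset.sum_sub_distrib, Finset.sum_ite_irrel]
  rw [hblock, mulVec_zero]
  rcases hG.weightedDist_eq_add_or_eq_add w k h with e | e <;> simp [e, add_mulVec, hWc]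

variable {K : Type*} [CommRing K] (G) [DecidableRel G.Adj]

noncomputable def weightedLapMatrix (w : Sym2 V → Matrix m m K) : Matrix V V (Matrix m m K) :=
  of fun i j =>
    if i = j then ∑ k ∈ G.neighborFinset i, (w s(i, k))⁻¹
    else if G.Adj i j then -(w s(i, j))⁻¹ else 0

lemma mul_weightedLapMatrix_apply (w : Sym2 V → Matrix m m K) (B : Matrix V V (Matrix m m K))
    (i j : V) :
    (B * G.weightedLapMatrix w) i j =
      ∑ k ∈ G.neighborFinset j, (B i j - B i k) * (w s(j, k))⁻¹ := by
  have hcol : ∀ k, G.weightedLapMatrix w k j =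
      (if k = j then ∑ l ∈ G.neighborFinset j, (w s(j, l))⁻¹ else 0) +
        if G.Adj j k then -(w s(j, k))⁻¹ else 0 := by
    intro k
    by_cases hkj : k = j
    · subst hkj; simp [weightedLapMatrix]
    · simp [weightedLapMatrix, hkj, G.adj_comm j k, Sym2.eq_swap]
  simp only [mul_apply, hcol, mul_add, Finset.sum_add_distrib, mul_ite, mul_zero,
    Finset.sum_ite_eq', Finset.mem_univ, if_true, ← Finset.sum_filter, Finset.mul_sum, sub_mul]
  rw [← neighborFinset_eq_filter, ← Finset.sum_add_distrib]
  simp only [mul_neg, sub_eq_add_neg]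

namespace IsTree

variable {G} (hG : G.IsTree) {w : Sym2 V → Matrix m m K}

theorem weightedDist_mul_weightedLapMatrix_apply_self
    (hw : ∀ u v, G.Adj u v → IsUnit (w s(u, v))) (j : V) :
    (of (hG.weightedDist w) * G.weightedLapMatrix w) j j = -((G.degree j : K) • 1) := by
  have hterm : ∀ k ∈ G.neighborFinset j,
      (hG.weightedDist w j j - hG.weightedDist w j k) * (w s(j, k))⁻¹ = -1 := by
    intro k hk
    rw [mem_neighborFinset] at hk
    rw [weightedDist_self, hG.weightedDist_of_adj w hk, zero_sub, neg_mul,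
      mul_nonsing_inv _ ((isUnit_iff_isUnit_det _).mp (hw j k hk))]
  simp only [mul_weightedLapMatrix_apply, of_apply]
  rw [Finset.sum_congr rfl hterm, Finset.sum_const, card_neighborFinset_eq_degree,
    Nat.cast_smul_eq_nsmul, smul_neg]

theorem weightedDist_mul_weightedLapMatrix_apply_of_ne
    (hw : ∀ u v, G.Adj u v → IsUnit (w s(u, v))) {i j : V} (hij : i ≠ j) :
    (of (hG.weightedDist w) * G.weightedLapMatrix w) i j = (2 - G.degree j : K) • 1 := by
  set p := hG.path i j
  set c := p.penultimate
  have hnil : ¬p.Nil := Walk.not_nil_of_ne hij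
  have hc : c ∈ G.neighborFinset j := by
    rw [mem_neighborFinset]; exact (p.adj_penultimate hnil).symm
  have hterm : ∀ k ∈ G.neighborFinset j,
      (hG.weightedDist w i j - hG.weightedDist w i k) * (w s(j, k))⁻¹ =
        -1 + if k = c then (2 : K) • 1 else 0 := by
    intro k hk
    rw [mem_neighborFinset] at hk
    have hinv := mul_nonsing_inv _ ((isUnit_iff_isUnit_det _).mp (hw j k hk))
    by_cases hkc : k = c
    · subst hkc
      rw [if_pos rfl, ← hG.weightedDist_penultimate_add w (hG.isPath_path i j) hnil,
        add_sub_cancel_left, Sym2.eq_swap, hinv, two_smul]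
      abel
    · rw [if_neg hkc, hG.weightedDist_of_adj_of_ne_penultimate w (hG.isPath_path i j) hk hkc,
        sub_add_cancel_left, neg_mul, hinv, add_zero]
  simp only [mul_weightedLapMatrix_apply, of_apply]
  rw [Finset.sum_congr rfl hterm, Finset.sum_add_distrib, Finset.sum_ite_eq' _ c, if_pos hc,
    Finset.sum_const, card_neighborFinset_eq_degree, sub_smul, ← Nat.cast_smul_eq_nsmul K,
    smul_neg]
  abel

end IsTree

end BlockMatrix

end SimpleGraph

/-- Let `T` be a tree on `n` vertices with `s × s` real matrix edge weights such
that the distance matrix `D` of `T` is invertible, and let `L` be the Laplacian formed from the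
inverses of the weights.  With `δᵢ = 2 - dᵢ` and `𝟙` the all-ones vector,
`D · L = (𝟙 δᵀ) ⊗ I_s - 2 Iₙ ⊗ I_s`. -/
theorem distanceMatrix_mul_lap {n s : ℕ}
    (G : SimpleGraph (Fin n)) [DecidableRel G.Adj] (hT : G.IsTree)
    (w : Sym2 (Fin n) → Matrix (Fin s) (Fin s) ℝ)
    (D : Matrix (Fin n × Fin s) (Fin n × Fin s) ℝ)
    (hD : ∀ (i j : Fin n) (p : G.Walk i j), p.IsPath →
      ∀ a b, D (i, a) (j, b) = ((p.edges.map w).sum) a b)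
    (hDinv : IsUnit D)
    (δ : Fin n → ℝ) (hδ : ∀ i, δ i = 2 - (G.degree i : ℝ)) :
    D * matLap G w = vecMulVec (fun _ => (1 : ℝ)) δ ⊗ₖ (1 : Matrix (Fin s) (Fin s) ℝ)
      - (2 : ℝ) • ((1 : Matrix (Fin n) (Fin n) ℝ) ⊗ₖ (1 : Matrix (Fin s) (Fin s) ℝ)) := by
  have hDcomp : D = comp _ _ _ _ ℝ (of (hT.weightedDist w)) := by
    ext ⟨i, a⟩ ⟨j, b⟩
    exact hD i j _ (hT.isPath_path i j) a b
  have hw : ∀ u v, G.Adj u v → IsUnit (w s(u, v)) := fun u v h =>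
    hT.isUnit_weight_of_isUnit_comp (hDcomp ▸ hDinv) h
  have hL : matLap G w = comp _ _ _ _ ℝ (G.weightedLapMatrix w) := by
    ext ⟨i, a⟩ ⟨j, b⟩
    simp only [matLap, SimpleGraph.weightedLapMatrix, of_apply, comp_apply]
    split_ifs <;> rfl
  rw [hDcomp, hL, ← compRingEquiv_apply, ← compRingEquiv_apply, ← map_mul, compRingEquiv_apply]
  ext ⟨i, a⟩ ⟨j, b⟩
  rcases eq_or_ne i j with rfl | hij
  · simp [hT.weightedDist_mul_weightedLapMatrix_apply_self hw, vecMulVec_apply, hδ, one_apply]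
    split_ifs <;> ring
  · simp [hT.weightedDist_mul_weightedLapMatrix_apply_of_ne hw hij, vecMulVec_apply, hδ, one_apply,
      hij]
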